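/- As the penalty coefficient k → ∞, the penalized inner problem recovers the hard-constrained problem: if there exists m ∈ Δ^n with η^L ≤ m ≤ η^U (the ambiguity set is nonempty), then for all sufficiently large k (indeed for k > λ·(max_i V_i − min_i V_i)), every optimal solution (m*, x*) of min_{m ∈ Δ^n, x ≥ 0, m − η^U ≤ x, η^L − m ≤ x} (λ m^T V + k Σ_i x_i) has x* = 0, and the optimal value equals min_{m ∈ Δ^n, η^L ≤ m ≤ η^U} λ m^T V. -/
import Mathlib

open Finset

lemma key_lemma (n : ℕ) (hn : 0 < n)
    (V ηL ηU : Fin n → ℝ) (lam : ℝ) (hlam : 0 ≤ lam)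
    (m0 : Fin n → ℝ) (hm00 : ∀ i, 0 ≤ m0 i) (hm01 : ∑ i, m0 i = 1)
    (hm0L : ∀ i, ηL i ≤ m0 i) (hm0U : ∀ i, m0 i ≤ ηU i)
    (m x : Fin n → ℝ)
    (hm : ∀ i, 0 ≤ m i) (hm1 : ∑ i, m i = 1) (hx : ∀ i, 0 ≤ x i)
    (hxU : ∀ i, m i - ηU i ≤ x i) (hxL : ∀ i, ηL i - m i ≤ x i) :
    ∃ w : Fin n → ℝ, (∀ i, 0 ≤ w i) ∧ (∑ i, w i = 1) ∧
      (∀ i, ηL i ≤ w i) ∧ (∀ i, w i ≤ ηU i) ∧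
      lam * (∑ i, w i * V i) ≤
        lam * (∑ i, m i * V i) + lam * ((⨆ i, V i) - ⨅ i, V i) * (∑ i, x i) := by
  haveI : Nonempty (Fin n) := ⟨⟨0, hn⟩⟩
  set L : Fin n → ℝ := fun i => max (ηL i) 0 with hLdef
  have hLU : ∀ i, L i ≤ ηU i := fun i =>
    max_le ((hm0L i).trans (hm0U i)) ((hm00 i).trans (hm0U i))
  set p : Fin n → ℝ := fun i => max (L i) (min (m i) (ηU i)) with hpdef
  have hpL : ∀ i, L i ≤ p i := fun i => le_max_left _ _
  have hpU : ∀ i, p i ≤ ηU i := fun i => max_le (hLU i) (min_le_right _ _)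
  have hp0 : ∀ i, 0 ≤ p i := fun i => le_trans (le_max_right _ 0) (hpL i)
  have hpx : ∀ i, |p i - m i| ≤ x i := by
    intro i
    rw [abs_sub_le_iff]
    constructor
    · -- p i - m i ≤ x i
      have h1 : ηL i ≤ m i + x i := by linarith [hxL i]
      have h2 : (0:ℝ) ≤ m i + x i := by linarith [hm i, hx i]
      have h3 : min (m i) (ηU i) ≤ m i + x i := (min_le_left _ _).trans (by linarith [hx i])
      have : p i ≤ m i + x i := max_le (max_le h1 h2) h3
      linarith
    · -- m i - p i ≤ x i
      have h1 : m i - x i ≤ min (m i) (ηU i) :=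
        le_min (by linarith [hx i]) (by linarith [hxU i])
      have : m i - x i ≤ p i := h1.trans (le_max_right _ _)
      linarith
  have hsum_abs : ∑ i, |p i - m i| ≤ ∑ i, x i := Finset.sum_le_sum fun i _ => hpx i
  set s : ℝ := ∑ i, p i with hsdef
  have hΔ : |1 - s| ≤ ∑ i, x i := by
    have : 1 - s = ∑ i, (m i - p i) := by
      rw [Finset.sum_sub_distrib, hm1]
    rw [this]
    calc |∑ i, (m i - p i)| ≤ ∑ i, |m i - p i| := Finset.abs_sum_le_sum_abs _ _
      _ = ∑ i, |p i - m i| := by simp [abs_sub_comm]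
      _ ≤ ∑ i, x i := hsum_abs
  have hSL : ∑ i, L i ≤ 1 := by
    rw [← hm01]; exact Finset.sum_le_sum fun i _ => max_le (hm0L i) (hm00 i)
  have hSU : (1:ℝ) ≤ ∑ i, ηU i := by
    rw [← hm01]; exact Finset.sum_le_sum fun i _ => hm0U i
  -- construct w : hard-feasible with ∑ |w i - p i| ≤ |1 - s|
  obtain ⟨w, hw0, hw1, hwL', hwU, hwp⟩ :
      ∃ w : Fin n → ℝ, (∀ i, L i ≤ w i) ∧ (∑ i, w i = 1) ∧ True ∧
        (∀ i, w i ≤ ηU i) ∧ (∑ i, |w i - p i| ≤ |1 - s|) := by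
    rcases lt_trichotomy s 1 with hs | hs | hs
    · -- need to add mass
      set S : ℝ := ∑ i, (ηU i - p i) with hSdef
      have hS1 : 1 - s ≤ S := by
        have : S = (∑ i, ηU i) - s := by rw [hSdef, Finset.sum_sub_distrib]
        linarith
      have hSpos : 0 < S := by linarith
      set θ : ℝ := (1 - s) / S with hθdef
      have hθ0 : 0 ≤ θ := div_nonneg (by linarith) hSpos.le
      have hθ1 : θ ≤ 1 := (div_le_one hSpos).2 hS1
      refine ⟨fun i => p i + θ * (ηU i - p i), ?_, ?_, trivial, ?_, ?_⟩
      · intro i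
        show L i ≤ p i + θ * (ηU i - p i)
        have : 0 ≤ θ * (ηU i - p i) := mul_nonneg hθ0 (by linarith [hpU i])
        linarith [hpL i]
      · have : ∑ i, (p i + θ * (ηU i - p i)) = s + θ * S := by
          rw [Finset.sum_add_distrib, ← Finset.mul_sum]
        rw [this, hθdef, div_mul_cancel₀ _ hSpos.ne']
        ring
      · intro i
        show p i + θ * (ηU i - p i) ≤ ηU i
        nlinarith [hpU i, hθ1, hθ0]
      · have heach : ∀ i, |p i + θ * (ηU i - p i) - p i| = θ * (ηU i - p i) := by
          intro i
          rw [add_sub_cancel_left, abs_of_nonneg (mul_nonneg hθ0 (by linarith [hpU i]))]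
        calc ∑ i, |p i + θ * (ηU i - p i) - p i| = ∑ i, θ * (ηU i - p i) := by
              exact Finset.sum_congr rfl fun i _ => heach i
          _ = θ * S := by rw [← Finset.mul_sum]
          _ = 1 - s := by rw [hθdef, div_mul_cancel₀ _ hSpos.ne']
          _ ≤ |1 - s| := le_abs_self _
    · exact ⟨p, hpL, by rw [← hsdef, ← hs], trivial, hpU, by simp⟩
    · -- need to remove mass
      set S : ℝ := ∑ i, (p i - L i) with hSdef
      have hS1 : s - 1 ≤ S := by
        have : S = s - (∑ i, L i) := by rw [hSdef, Finset.sum_sub_distrib]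
        linarith
      have hSpos : 0 < S := by linarith
      set θ : ℝ := (s - 1) / S with hθdef
      have hθ0 : 0 ≤ θ := div_nonneg (by linarith) hSpos.le
      have hθ1 : θ ≤ 1 := (div_le_one hSpos).2 hS1
      refine ⟨fun i => p i - θ * (p i - L i), ?_, ?_, trivial, ?_, ?_⟩
      · intro i
        show L i ≤ p i - θ * (p i - L i)
        nlinarith [hpL i, hθ1, hθ0]
      · have : ∑ i, (p i - θ * (p i - L i)) = s - θ * S := by
          rw [Finset.sum_sub_distrib, ← Finset.mul_sum]
        rw [this, hθdef, div_mul_cancel₀ _ hSpos.ne']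
        ring
      · intro i
        show p i - θ * (p i - L i) ≤ ηU i
        have : 0 ≤ θ * (p i - L i) := mul_nonneg hθ0 (by linarith [hpL i])
        linarith [hpU i]
      · have heach : ∀ i, |p i - θ * (p i - L i) - p i| = θ * (p i - L i) := by
          intro i
          rw [sub_sub_cancel_left, abs_neg,
            abs_of_nonneg (mul_nonneg hθ0 (by linarith [hpL i]))]
        calc ∑ i, |p i - θ * (p i - L i) - p i| = ∑ i, θ * (p i - L i) := by
              exact Finset.sum_congr rfl fun i _ => heach i
          _ = θ * S := by rw [← Finset.mul_sum]
          _ = s - 1 := by rw [hθdef, div_mul_cancel₀ _ hSpos.ne']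
          _ ≤ |1 - s| := by rw [abs_sub_comm]; exact le_abs_self _
  have hw0' : ∀ i, 0 ≤ w i := fun i => le_trans (le_max_right _ 0) (hw0 i)
  have hwL : ∀ i, ηL i ≤ w i := fun i => le_trans (le_max_left _ 0) (hw0 i)
  refine ⟨w, hw0', hw1, hwL, hwU, ?_⟩
  -- objective bound
  set c : ℝ := ((⨆ i, V i) + ⨅ i, V i) / 2 with hcdef
  set r : ℝ := ((⨆ i, V i) - ⨅ i, V i) / 2 with hrdef
  have hVb : ∀ i, (⨅ j, V j) ≤ V i ∧ V i ≤ ⨆ j, V j := fun i =>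
    ⟨ciInf_le (Finite.bddBelow_range V) i, le_ciSup (Finite.bddAbove_range V) i⟩
  have hVc : ∀ i, |V i - c| ≤ r := by
    intro i
    have h := hVb i
    rw [abs_le, hcdef, hrdef]
    constructor <;> linarith [h.1, h.2]
  have hr0 : 0 ≤ r := by
    have h := hVb ⟨0, hn⟩
    rw [hrdef]; linarith [h.1, h.2]
  have hd0 : ∑ i, (w i - m i) = 0 := by
    rw [Finset.sum_sub_distrib, hw1, hm1]; ring
  have hdabs : ∑ i, |w i - m i| ≤ 2 * ∑ i, x i := by
    have h1 : ∀ i, |w i - m i| ≤ |w i - p i| + |p i - m i| := fun i => by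
      have : w i - m i = (w i - p i) + (p i - m i) := by ring
      rw [this]; exact abs_add_le _ _
    calc ∑ i, |w i - m i| ≤ ∑ i, (|w i - p i| + |p i - m i|) :=
          Finset.sum_le_sum fun i _ => h1 i
      _ = (∑ i, |w i - p i|) + ∑ i, |p i - m i| := Finset.sum_add_distrib
      _ ≤ |1 - s| + ∑ i, x i := add_le_add hwp hsum_abs
      _ ≤ 2 * ∑ i, x i := by linarith [hΔ]
  have hkey : (∑ i, w i * V i) - (∑ i, m i * V i) ≤
      ((⨆ i, V i) - ⨅ i, V i) * (∑ i, x i) := by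
    have h1 : ∑ i, (w i - m i) * (V i - c) =
        (∑ i, w i * V i) - (∑ i, m i * V i) := by
      have e : ∀ i ∈ Finset.univ, (w i - m i) * (V i - c) =
          (w i * V i - m i * V i) - c * (w i - m i) := fun i _ => by ring
      rw [Finset.sum_congr rfl e, Finset.sum_sub_distrib, Finset.sum_sub_distrib,
        ← Finset.mul_sum, hd0, mul_zero, sub_zero]
    have h2 : ∑ i, (w i - m i) * (V i - c) ≤ ∑ i, |w i - m i| * r :=
      Finset.sum_le_sum fun i _ => by
        calc (w i - m i) * (V i - c) ≤ |(w i - m i) * (V i - c)| := le_abs_self _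
          _ = |w i - m i| * |V i - c| := abs_mul _ _
          _ ≤ |w i - m i| * r := mul_le_mul_of_nonneg_left (hVc i) (abs_nonneg _)
    have h3 : ∑ i, |w i - m i| * r = (∑ i, |w i - m i|) * r := (Finset.sum_mul _ _ _).symm
    have h4 : (∑ i, |w i - m i|) * r ≤ (2 * ∑ i, x i) * r :=
      mul_le_mul_of_nonneg_right hdabs hr0
    have h5 : (2 * ∑ i, x i) * r = ((⨆ i, V i) - ⨅ i, V i) * (∑ i, x i) := by
      rw [hrdef]; ring
    linarith [h1, h2, h3, h4, h5]
  have h6 : lam * ((∑ i, w i * V i) - ∑ i, m i * V i) ≤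
      lam * (((⨆ i, V i) - ⨅ i, V i) * (∑ i, x i)) :=
    mul_le_mul_of_nonneg_left hkey hlam
  nlinarith [h6]



/-- For penalty coefficient `k > λ (max V − min V)`, the penalized inner problem
recovers the hard-constrained one: every optimal solution has zero slack and the
optimal values agree. -/
theorem penalty_recovers_hard_constraints (n : ℕ) (hn : 0 < n)
    (V ηL ηU : Fin n → ℝ) (lam k : ℝ) (hlam : 0 ≤ lam) (hk : 0 < k)
    (hfeas : ∃ m : Fin n → ℝ, (∀ i, 0 ≤ m i) ∧ (∑ i, m i = 1) ∧
      (∀ i, ηL i ≤ m i) ∧ (∀ i, m i ≤ ηU i))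
    (hklarge : lam * ((⨆ i, V i) - ⨅ i, V i) < k) :
    (∀ m x : Fin n → ℝ,
      ((∀ i, 0 ≤ m i) ∧ (∑ i, m i = 1) ∧ (∀ i, 0 ≤ x i) ∧
        (∀ i, m i - ηU i ≤ x i) ∧ (∀ i, ηL i - m i ≤ x i)) →
      (∀ m' x' : Fin n → ℝ,
        ((∀ i, 0 ≤ m' i) ∧ (∑ i, m' i = 1) ∧ (∀ i, 0 ≤ x' i) ∧
          (∀ i, m' i - ηU i ≤ x' i) ∧ (∀ i, ηL i - m' i ≤ x' i)) →
        lam * (∑ i, m i * V i) + k * (∑ i, x i) ≤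
          lam * (∑ i, m' i * V i) + k * (∑ i, x' i)) →
      x = 0) ∧
    sInf {y : ℝ | ∃ m x : Fin n → ℝ,
        (∀ i, 0 ≤ m i) ∧ (∑ i, m i = 1) ∧ (∀ i, 0 ≤ x i) ∧
        (∀ i, m i - ηU i ≤ x i) ∧ (∀ i, ηL i - m i ≤ x i) ∧
        y = lam * (∑ i, m i * V i) + k * (∑ i, x i)} =
      sInf {y : ℝ | ∃ m : Fin n → ℝ,
        (∀ i, 0 ≤ m i) ∧ (∑ i, m i = 1) ∧
        (∀ i, ηL i ≤ m i) ∧ (∀ i, m i ≤ ηU i) ∧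
        y = lam * (∑ i, m i * V i)} := by
  haveI : Nonempty (Fin n) := ⟨⟨0, hn⟩⟩
  obtain ⟨m0, hm00, hm01, hm0L, hm0U⟩ := hfeas
  set spread : ℝ := (⨆ i, V i) - ⨅ i, V i with hspread
  set P : Set ℝ := {y : ℝ | ∃ m x : Fin n → ℝ,
        (∀ i, 0 ≤ m i) ∧ (∑ i, m i = 1) ∧ (∀ i, 0 ≤ x i) ∧
        (∀ i, m i - ηU i ≤ x i) ∧ (∀ i, ηL i - m i ≤ x i) ∧
        y = lam * (∑ i, m i * V i) + k * (∑ i, x i)} with hPdef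
  set H : Set ℝ := {y : ℝ | ∃ m : Fin n → ℝ,
        (∀ i, 0 ≤ m i) ∧ (∑ i, m i = 1) ∧
        (∀ i, ηL i ≤ m i) ∧ (∀ i, m i ≤ ηU i) ∧
        y = lam * (∑ i, m i * V i)} with hHdef
  -- lower bound for any simplex element
  have hlb : ∀ m : Fin n → ℝ, (∀ i, 0 ≤ m i) → (∑ i, m i = 1) →
      lam * (⨅ i, V i) ≤ lam * (∑ i, m i * V i) := by
    intro m hm hm1
    apply mul_le_mul_of_nonneg_left _ hlam
    calc (⨅ i, V i) = ∑ i, m i * (⨅ j, V j) := by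
          rw [← Finset.sum_mul, hm1, one_mul]
      _ ≤ ∑ i, m i * V i := Finset.sum_le_sum fun i _ =>
          mul_le_mul_of_nonneg_left (ciInf_le (Finite.bddBelow_range V) i) (hm i)
  have hHne : H.Nonempty := ⟨lam * (∑ i, m0 i * V i), m0, hm00, hm01, hm0L, hm0U, rfl⟩
  have hHP : H ⊆ P := by
    rintro y ⟨m, h0, h1, hL, hU, rfl⟩
    exact ⟨m, 0, h0, h1, fun i => le_refl 0, fun i => by simpa using sub_nonpos.2 (hU i),
      fun i => by simpa using sub_nonpos.2 (hL i), by simp⟩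
  have hPne : P.Nonempty := hHne.mono hHP
  have hbddP : BddBelow P := by
    refine ⟨lam * (⨅ i, V i), ?_⟩
    rintro y ⟨m, x, h0, h1, hx, _, _, rfl⟩
    have h2 : 0 ≤ k * ∑ i, x i :=
      mul_nonneg hk.le (Finset.sum_nonneg fun i _ => hx i)
    linarith [hlb m h0 h1]
  have hbddH : BddBelow H := hbddP.mono hHP
  -- key bound for any penal-feasible point
  have hkey : ∀ m x : Fin n → ℝ,
      (∀ i, 0 ≤ m i) → (∑ i, m i = 1) → (∀ i, 0 ≤ x i) →
      (∀ i, m i - ηU i ≤ x i) → (∀ i, ηL i - m i ≤ x i) →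
      ∃ w : Fin n → ℝ, (∀ i, 0 ≤ w i) ∧ (∑ i, w i = 1) ∧
        (∀ i, ηL i ≤ w i) ∧ (∀ i, w i ≤ ηU i) ∧
        lam * (∑ i, w i * V i) ≤
          lam * (∑ i, m i * V i) + lam * spread * (∑ i, x i) :=
    fun m x h0 h1 hx hU hL =>
      key_lemma n hn V ηL ηU lam hlam m0 hm00 hm01 hm0L hm0U m x h0 h1 hx hU hL
  constructor
  · -- every optimal solution has zero slack
    rintro m x ⟨h0, h1, hx, hxU, hxL⟩ hopt
    obtain ⟨w, hw0, hw1, hwL, hwU, hwb⟩ := hkey m x h0 h1 hx hxU hxL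
    have hxs : 0 ≤ ∑ i, x i := Finset.sum_nonneg fun i _ => hx i
    have h2 := hopt w 0 ⟨hw0, hw1, fun i => le_refl 0,
      fun i => by simpa using sub_nonpos.2 (hwU i),
      fun i => by simpa using sub_nonpos.2 (hwL i)⟩
    simp only [Finset.sum_const_zero, mul_zero, add_zero, Pi.zero_apply] at h2
    -- k * Σx ≤ lam * spread * Σx
    have h3 : k * (∑ i, x i) ≤ lam * spread * (∑ i, x i) := by linarith
    have h4 : ∑ i, x i ≤ 0 := by nlinarith
    have h5 : ∑ i, x i = 0 := le_antisymm h4 hxs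
    funext i
    have := (Finset.sum_eq_zero_iff_of_nonneg (fun i _ => hx i)).1 h5 i (Finset.mem_univ i)
    simpa using this
  · -- equality of infima
    apply le_antisymm
    · exact csInf_le_csInf hbddP hHne hHP
    · apply le_csInf hPne
      rintro y ⟨m, x, h0, h1, hx, hxU, hxL, rfl⟩
      obtain ⟨w, hw0, hw1, hwL, hwU, hwb⟩ := hkey m x h0 h1 hx hxU hxL
      have hxs : 0 ≤ ∑ i, x i := Finset.sum_nonneg fun i _ => hx i
      have hmem : lam * (∑ i, w i * V i) ∈ H := ⟨w, hw0, hw1, hwL, hwU, rfl⟩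
      have h2 : sInf H ≤ lam * (∑ i, w i * V i) := csInf_le hbddH hmem
      have h3 : lam * spread * (∑ i, x i) ≤ k * (∑ i, x i) :=
        mul_le_mul_of_nonneg_right hklarge.le hxs
      linarith
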